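/- Fix j ≥ 1 and a finite set S with |S| ≥ 2. Let H be the subgroup of the free group F(S) generated by all positive words of length exactly j (viewed as elements of F(S)). Then every element of F(S) lies in a coset a·H where a is a positive word of length strictly less than j. In particular, H has finite index in F(S), with index at most the number of positive words of length < j. -/

import Mathlib

/-- The set of positive words of length exactly `j`, as elements of the free group. -/
def posWordsLen (S : Type) (j : ℕ) : Set (FreeGroup S) :=
  {w | ∃ l : List S, l.length = j ∧ w = (l.map FreeGroup.of).prod}

namespace PosWordsAux

variable {S : Type}

/-- Product of a positive word. -/
abbrev P (l : List S) : FreeGroup S := (l.map FreeGroup.of).prod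

lemma P_append (l m : List S) : P (l ++ m) = P l * P m := by
  simp [P]

lemma P_cons (a : S) (l : List S) : P (a :: l) = FreeGroup.of a * P l := by
  simp [P]

lemma P_replicate (n : ℕ) (b : S) : P (List.replicate n b) = FreeGroup.of b ^ n := by
  simp [P, List.map_replicate, List.prod_replicate]

lemma mem_of_len {j : ℕ} (l : List S) (hl : l.length = j) :
    P l ∈ Subgroup.closure (posWordsLen S j) :=
  Subgroup.subset_closure ⟨l, hl, rfl⟩

/-- Conjugation of a length-`n+1` generator by `of s` stays in the closure. -/
lemma conj_gen_mem {n : ℕ} (s : S) (l : List S) (hl : l.length = n + 1) :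
    FreeGroup.of s * P l * (FreeGroup.of s)⁻¹ ∈ Subgroup.closure (posWordsLen S (n + 1)) := by
  have hne : l ≠ [] := by intro h; simp [h] at hl
  set a := l.getLast hne with ha
  set m := l.dropLast with hm
  have hdec : m ++ [a] = l := List.dropLast_append_getLast hne
  have hmlen : m.length = n := by
    have := congrArg List.length hdec
    simp at this; omega
  have hPl : P l = P m * FreeGroup.of a := by
    rw [← hdec, P_append]; simp [P]
  have key : FreeGroup.of s * P l * (FreeGroup.of s)⁻¹ =
      P (s :: m) * (P (a :: List.replicate n s) * (P (List.replicate (n + 1) s))⁻¹) := by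
    rw [hPl, P_cons, P_cons, P_replicate, P_replicate]
    group
  rw [key]
  refine Subgroup.mul_mem _ (mem_of_len _ (by simp [hmlen])) ?_
  refine Subgroup.mul_mem _ (mem_of_len _ (by simp)) ?_
  exact Subgroup.inv_mem _ (mem_of_len _ (by simp))

/-- Conjugation of a length-`n+1` generator by `(of s)⁻¹` stays in the closure. -/
lemma conj_gen_mem' {n : ℕ} (s : S) (l : List S) (hl : l.length = n + 1) :
    (FreeGroup.of s)⁻¹ * P l * FreeGroup.of s ∈ Subgroup.closure (posWordsLen S (n + 1)) := by
  have hne : l ≠ [] := by intro h; simp [h] at hl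
  set hd := l.head hne with hhd
  set t := l.tail with ht
  have hdec : hd :: t = l := List.cons_head_tail hne
  have htlen : t.length = n := by
    have := congrArg List.length hdec
    simp at this; omega
  have hPl : P l = FreeGroup.of hd * P t := by
    rw [← hdec, P_cons]
  have key : (FreeGroup.of s)⁻¹ * P l * FreeGroup.of s =
      (P (List.replicate (n + 1) s))⁻¹ *
        (P (List.replicate n s ++ [hd]) * P (t ++ [s])) := by
    rw [hPl, P_append, P_append, P_replicate, P_replicate]
    simp only [P_cons, P]
    simp
    group
  rw [key]
  refine Subgroup.mul_mem _ (Subgroup.inv_mem _ (mem_of_len _ (by simp))) ?_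
  refine Subgroup.mul_mem _ (mem_of_len _ (by simp)) (mem_of_len _ (by simp [htlen]))

lemma conj_mem {n : ℕ} (s : S) (h : FreeGroup S)
    (hh : h ∈ Subgroup.closure (posWordsLen S (n + 1))) :
    FreeGroup.of s * h * (FreeGroup.of s)⁻¹ ∈ Subgroup.closure (posWordsLen S (n + 1)) := by
  induction hh using Subgroup.closure_induction with
  | mem x hx =>
      obtain ⟨l, hl, rfl⟩ := hx
      exact conj_gen_mem s l hl
  | one => simpa using Subgroup.one_mem _
  | mul x y hx hy px py =>
      have : FreeGroup.of s * (x * y) * (FreeGroup.of s)⁻¹ =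
          (FreeGroup.of s * x * (FreeGroup.of s)⁻¹) *
          (FreeGroup.of s * y * (FreeGroup.of s)⁻¹) := by group
      rw [this]; exact Subgroup.mul_mem _ px py
  | inv x hx px =>
      have : FreeGroup.of s * x⁻¹ * (FreeGroup.of s)⁻¹ =
          (FreeGroup.of s * x * (FreeGroup.of s)⁻¹)⁻¹ := by group
      rw [this]; exact Subgroup.inv_mem _ px

lemma conj_mem' {n : ℕ} (s : S) (h : FreeGroup S)
    (hh : h ∈ Subgroup.closure (posWordsLen S (n + 1))) :
    (FreeGroup.of s)⁻¹ * h * FreeGroup.of s ∈ Subgroup.closure (posWordsLen S (n + 1)) := by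
  induction hh using Subgroup.closure_induction with
  | mem x hx =>
      obtain ⟨l, hl, rfl⟩ := hx
      exact conj_gen_mem' s l hl
  | one => simpa using Subgroup.one_mem _
  | mul x y hx hy px py =>
      have : (FreeGroup.of s)⁻¹ * (x * y) * FreeGroup.of s =
          ((FreeGroup.of s)⁻¹ * x * FreeGroup.of s) *
          ((FreeGroup.of s)⁻¹ * y * FreeGroup.of s) := by group
      rw [this]; exact Subgroup.mul_mem _ px py
  | inv x hx px =>
      have : (FreeGroup.of s)⁻¹ * x⁻¹ * FreeGroup.of s =
          ((FreeGroup.of s)⁻¹ * x * FreeGroup.of s)⁻¹ := by group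
      rw [this]; exact Subgroup.inv_mem _ px

lemma H_normal {n : ℕ} : (Subgroup.closure (posWordsLen S (n + 1))).Normal := by
  rw [← Subgroup.normalizer_eq_top_iff]
  rw [eq_top_iff, ← FreeGroup.closure_range_of, Subgroup.closure_le]
  rintro - ⟨s, rfl⟩
  rw [SetLike.mem_coe, Subgroup.mem_normalizer_iff]
  intro h
  constructor
  · exact conj_mem s h
  · intro hc
    have := conj_mem' s _ hc
    have e : (FreeGroup.of s)⁻¹ * (FreeGroup.of s * h * (FreeGroup.of s)⁻¹) *
        FreeGroup.of s = h := by group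
    rwa [e] at this

end PosWordsAux

open PosWordsAux in
/-- Every element of `F(S)` lies in a coset `a • H` where `a` is a positive word of
length `< j`, and hence `H = ⟨W_j⁺⟩` has finite index, at most the number of
positive words of length `< j`. -/
theorem coset_reps_and_finite_index (S : Type) [Fintype S] (j : ℕ)
    (hS : 2 ≤ Fintype.card S) (hj : 1 ≤ j)
    (H : Subgroup (FreeGroup S)) (hH : H = Subgroup.closure (posWordsLen S j)) :
    (∀ g : FreeGroup S, ∃ l : List S, l.length < j ∧
        ∃ h ∈ H, g = (l.map FreeGroup.of).prod * h) ∧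
    H.index ≠ 0 ∧ H.index ≤ ∑ i ∈ Finset.range j, Fintype.card S ^ i := by
  obtain ⟨n, rfl⟩ : ∃ n, j = n + 1 := ⟨j - 1, by omega⟩
  haveI hnorm : H.Normal := by rw [hH]; exact H_normal
  have hnonempty : Nonempty S := Fintype.card_pos_iff.1 (by omega)
  obtain ⟨b⟩ := hnonempty
  have hmem : ∀ l : List S, l.length = n + 1 → P l ∈ H := fun l hl => by
    rw [hH]; exact mem_of_len l hl
  -- `(of b)^(n+1) ∈ H`
  have hbj : FreeGroup.of b ^ (n + 1) ∈ H := by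
    have := hmem (List.replicate (n + 1) b) (by simp)
    rwa [P_replicate] at this
  -- `of s * (of b)⁻¹ ∈ H`
  have hsb : ∀ s : S, FreeGroup.of s * (FreeGroup.of b)⁻¹ ∈ H := by
    intro s
    have h1 := hmem (s :: List.replicate n b) (by simp)
    have h2 := hbj
    have e : FreeGroup.of s * (FreeGroup.of b)⁻¹ =
        P (s :: List.replicate n b) * (FreeGroup.of b ^ (n + 1))⁻¹ := by
      rw [P_cons, P_replicate]; group
    rw [e]
    exact Subgroup.mul_mem _ h1 (Subgroup.inv_mem _ h2)
  -- quotient setup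
  set Q := FreeGroup S ⧸ H with hQ
  set π : FreeGroup S →* Q := QuotientGroup.mk' H with hπ
  set x : Q := π (FreeGroup.of b) with hx
  have hπs : ∀ s : S, π (FreeGroup.of s) = x := by
    intro s
    have : π (FreeGroup.of s * (FreeGroup.of b)⁻¹) = 1 :=
      (QuotientGroup.eq_one_iff _).2 (hsb s)
    rw [map_mul, map_inv] at this
    rw [hx]
    exact (mul_inv_eq_one.1 this)
  have hxj : x ^ (n + 1) = 1 := by
    rw [hx, ← map_pow]
    exact (QuotientGroup.eq_one_iff _).2 hbj
  -- exponent-sum homomorphism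
  set σ : FreeGroup S →* Multiplicative ℤ :=
    FreeGroup.lift (fun _ => Multiplicative.ofAdd 1) with hσ
  have hπσ : π = (zpowersHom Q x).comp σ := by
    apply FreeGroup.ext_hom
    intro a
    rw [MonoidHom.comp_apply, hσ, FreeGroup.lift_apply_of, zpowersHom_apply, hπs a]
    simp
  -- coset representative for each `g`
  have key : ∀ g : FreeGroup S, ∃ k : ℕ, k < n + 1 ∧ π g = x ^ k := by
    intro g
    obtain ⟨q, k, hk, hzdec⟩ : ∃ (q : ℤ) (k : ℕ), k < n + 1 ∧
        Multiplicative.toAdd (σ g) = ((n + 1 : ℕ) : ℤ) * q + (k : ℤ) := by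
      refine ⟨Multiplicative.toAdd (σ g) / (n + 1),
        (Multiplicative.toAdd (σ g) % (n + 1)).toNat, ?_, ?_⟩
      · have h1 : 0 ≤ Multiplicative.toAdd (σ g) % (n + 1) :=
          Int.emod_nonneg _ (by positivity)
        have h2 : Multiplicative.toAdd (σ g) % (n + 1) < (n + 1 : ℤ) :=
          Int.emod_lt_of_pos _ (by positivity)
        omega
      · have h1 : 0 ≤ Multiplicative.toAdd (σ g) % (n + 1) :=
          Int.emod_nonneg _ (by positivity)
        rw [Int.toNat_of_nonneg h1]
        push_cast
        exact (Int.mul_ediv_add_emod _ _).symm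
    refine ⟨k, hk, ?_⟩
    have hπg : π g = x ^ (Multiplicative.toAdd (σ g)) := by
      rw [hπσ, MonoidHom.comp_apply, zpowersHom_apply]
    rw [hπg, hzdec, zpow_add, zpow_mul, zpow_natCast, hxj, one_zpow, one_mul,
      zpow_natCast]
  have coset : ∀ g : FreeGroup S, ∃ l : List S, l.length < n + 1 ∧
      ∃ h ∈ H, g = (l.map FreeGroup.of).prod * h := by
    intro g
    obtain ⟨k, hk, hgk⟩ := key g
    refine ⟨List.replicate k b, by simp [hk], (P (List.replicate k b))⁻¹ * g, ?_, by group⟩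
    rw [← QuotientGroup.eq_one_iff (G := FreeGroup S) (N := H)]
    show π _ = 1
    rw [map_mul, map_inv, P_replicate, map_pow]
    rw [hgk, ← hx]
    group
  refine ⟨coset, ?_, ?_⟩
  · -- index ≠ 0
    haveI : NeZero (n + 1) := ⟨Nat.succ_ne_zero n⟩
    have hsurj : Function.Surjective (fun k : ZMod (n + 1) => x ^ k.val) := by
      intro q
      obtain ⟨g, rfl⟩ := QuotientGroup.mk'_surjective H q
      obtain ⟨k, hk, hgk⟩ := key g
      exact ⟨(k : ZMod (n + 1)), by
        show x ^ (ZMod.val _) = _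
        rw [ZMod.val_cast_of_lt hk]; exact hgk.symm⟩
    haveI : Finite Q := Finite.of_surjective _ hsurj
    have h0 : Nat.card Q ≠ 0 := Nat.card_ne_zero.2 ⟨⟨1⟩, inferInstance⟩
    exact h0
  · -- index bound
    haveI : NeZero (n + 1) := ⟨Nat.succ_ne_zero n⟩
    have hsurj : Function.Surjective (fun k : ZMod (n + 1) => x ^ k.val) := by
      intro q
      obtain ⟨g, rfl⟩ := QuotientGroup.mk'_surjective H q
      obtain ⟨k, hk, hgk⟩ := key g
      exact ⟨(k : ZMod (n + 1)), by
        show x ^ (ZMod.val _) = _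
        rw [ZMod.val_cast_of_lt hk]; exact hgk.symm⟩
    have h1 : H.index ≤ n + 1 := by
      calc H.index = Nat.card Q := rfl
        _ ≤ Nat.card (ZMod (n + 1)) := Nat.card_le_card_of_surjective _ hsurj
        _ = n + 1 := Nat.card_zmod _
    refine h1.trans ?_
    calc n + 1 = ∑ _i ∈ Finset.range (n + 1), 1 := by simp
      _ ≤ ∑ i ∈ Finset.range (n + 1), Fintype.card S ^ i :=
          Finset.sum_le_sum (fun i _ => Nat.one_le_pow i _ (by omega))
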